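/- arXiv:2406.00710 — 2 statements merged into one kernel-verified Lean document; each statement's English description precedes it below -/
import Mathlib

section
/- For every n ≥ 2, the power graph of the generalised quaternion group Q_{2^{n+1}} equals its enhanced power graph and also equals its commuting graph: distinct elements x, y of Q_{2^{n+1}} commute if and only if one is a power of the other. -/
/-- The power graph of a group: distinct `x`, `y` are adjacent iff one is a power of the other. -/
def powerGraph (G : Type*) [Group G] : SimpleGraph G where
  Adj x y := x ≠ y ∧ ((∃ k : ℤ, x = y ^ k) ∨ (∃ k : ℤ, y = x ^ k))
  symm := by
    constructor
    rintro x y ⟨hne, h | h⟩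
    · exact ⟨hne.symm, Or.inr h⟩
    · exact ⟨hne.symm, Or.inl h⟩
  loopless := by constructor; rintro x ⟨hne, -⟩; exact hne rfl

/-- The commuting graph of a group: distinct `x`, `y` are adjacent iff they commute. -/
def commutingGraph (G : Type*) [Group G] : SimpleGraph G where
  Adj x y := x ≠ y ∧ x * y = y * x
  symm := by constructor; rintro x y ⟨hne, h⟩; exact ⟨hne.symm, h.symm⟩
  loopless := by constructor; rintro x ⟨hne, -⟩; exact hne rfl

/-- The enhanced power graph of a group: distinct `x`, `y` are adjacent iff `⟨x, y⟩` is cyclic. -/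
def enhancedPowerGraph (G : Type*) [Group G] : SimpleGraph G where
  Adj x y := x ≠ y ∧ IsCyclic ↥(Subgroup.closure {x, y})
  symm := by constructor; rintro x y ⟨hne, h⟩; rw [Set.pair_comm] at h; exact ⟨hne.symm, h⟩
  loopless := by constructor; rintro x ⟨hne, -⟩; exact hne rfl

/-! In `Q_{2^{n+1}}` the rotations `a i` form a cyclic `2`-group, whose subgroups form a chain, so
any two rotations are powers of one another. An element `xa j` commutes only with the four
elements `1, a n, xa j, xa (j + n)` of its own cyclic subgroup (`i + i = 0` in `ZMod (2 n)` forces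
`i ∈ {0, n}`). So commuting elements are powers of one another, which closes up the inclusions
power graph ≤ enhanced power graph ≤ commuting graph, valid in every group. -/

namespace ZMod

theorem dvd_natCast_gcd_val {N : ℕ} (z : ZMod N) : z ∣ (Nat.gcd z.val N : ZMod N) :=
  ⟨z⁻¹, (mul_inv_eq_gcd z).symm⟩

theorem natCast_gcd_val_dvd {N : ℕ} [NeZero N] (z : ZMod N) :
    (Nat.gcd z.val N : ZMod N) ∣ z := by
  simpa using Nat.cast_dvd_cast (α := ZMod N) (Nat.gcd_dvd_left z.val N)

theorem dvd_or_dvd_of_isPrimePow {N : ℕ} (hN : IsPrimePow N) (x y : ZMod N) : x ∣ y ∨ y ∣ x := by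
  obtain ⟨p, e, hp, -, rfl⟩ := hN
  have hp : p.Prime := Nat.prime_iff.mpr hp
  have : NeZero (p ^ e) := ⟨pow_ne_zero _ hp.ne_zero⟩
  -- each `z` divides and is divided by `gcd z.val (p ^ e)`, a power of `p`
  obtain ⟨i, -, hi⟩ := (Nat.dvd_prime_pow hp).1 (Nat.gcd_dvd_right x.val (p ^ e))
  obtain ⟨j, -, hj⟩ := (Nat.dvd_prime_pow hp).1 (Nat.gcd_dvd_right y.val (p ^ e))
  have hx := x.dvd_natCast_gcd_val
  have hy := y.dvd_natCast_gcd_val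
  have hx' := x.natCast_gcd_val_dvd
  have hy' := y.natCast_gcd_val_dvd
  rw [hi] at hx hx'
  rw [hj] at hy hy'
  rcases le_total i j with hij | hij
  · exact .inl <| hx.trans <| (Nat.cast_dvd_cast (pow_dvd_pow p hij)).trans hy'
  · exact .inr <| hy.trans <| (Nat.cast_dvd_cast (pow_dvd_pow p hij)).trans hx'

theorem natCast_add_self_eq_zero (n : ℕ) : (n : ZMod (2 * n)) + n = 0 := by
  rw [← Nat.cast_add, ← two_mul, natCast_self]

theorem add_self_eq_zero_iff {n : ℕ} [NeZero n] {i : ZMod (2 * n)} :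
    i + i = 0 ↔ i = 0 ∨ i = n := by
  constructor
  · intro h
    have hdvd : 2 * n ∣ 2 * i.val := by
      rw [← natCast_eq_zero_iff]; simpa [two_mul] using h
    obtain ⟨t, ht⟩ := Nat.dvd_of_mul_dvd_mul_left two_pos hdvd
    have : t < 2 := by nlinarith [i.val_lt]
    rw [← natCast_zmod_val i, ht]
    interval_cases t <;> simp
  · rintro (rfl | rfl)
    · exact add_zero 0
    · exact natCast_add_self_eq_zero n

end ZMod

namespace QuaternionGroup

variable {n : ℕ}

theorem a_pow (i : ZMod (2 * n)) (k : ℕ) : a i ^ k = a ((k : ZMod (2 * n)) * i) := by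
  induction k with
  | zero => rw [pow_zero, Nat.cast_zero, zero_mul, a_zero]
  | succ k ih => rw [pow_succ, ih, a_mul_a]; push_cast; ring_nf

theorem commute_a_xa_iff {i j : ZMod (2 * n)} : Commute (a i) (xa j) ↔ i + i = 0 := by
  rw [Commute, SemiconjBy, a_mul_xa, xa_mul_a, xa.injEq]
  constructor <;> intro h <;> linear_combination -h

theorem commute_xa_xa_iff {i j : ZMod (2 * n)} :
    Commute (xa i) (xa j) ↔ (i - j) + (i - j) = 0 := by
  rw [Commute, SemiconjBy, xa_mul_xa, xa_mul_xa, a.injEq]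
  constructor <;> intro h <;> linear_combination -h

theorem exists_a_eq_a_zpow_or (hn : IsPrimePow (2 * n)) (i j : ZMod (2 * n)) :
    (∃ k : ℤ, a i = a j ^ k) ∨ (∃ k : ℤ, a j = a i ^ k) := by
  have : NeZero (2 * n) := ⟨hn.ne_zero⟩
  have key : ∀ {i j : ZMod (2 * n)}, i ∣ j → ∃ k : ℤ, a j = a i ^ k := by
    rintro i _ ⟨c, rfl⟩
    exact ⟨c.val, by rw [zpow_natCast, a_pow, ZMod.natCast_zmod_val, mul_comm]⟩
  exact (ZMod.dvd_or_dvd_of_isPrimePow hn j i).imp key key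

variable [NeZero n]

theorem exists_a_eq_xa_zpow {i : ZMod (2 * n)} (h : i + i = 0) (j : ZMod (2 * n)) :
    ∃ k : ℤ, a i = xa j ^ k := by
  rcases ZMod.add_self_eq_zero_iff.1 h with rfl | rfl
  · exact ⟨0, by rw [zpow_zero, a_zero]⟩
  · exact ⟨2, by rw [zpow_ofNat, xa_sq]⟩

theorem exists_xa_eq_xa_zpow {i j : ZMod (2 * n)} (h : (i - j) + (i - j) = 0) :
    ∃ k : ℤ, xa i = xa j ^ k := by
  rcases ZMod.add_self_eq_zero_iff.1 h with h | h
  · exact ⟨1, by rw [zpow_one, sub_eq_zero.1 h]⟩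
  · refine ⟨3, ?_⟩
    rw [zpow_ofNat, pow_succ, xa_sq, a_mul_xa, xa.injEq]
    linear_combination h + ZMod.natCast_add_self_eq_zero n

theorem exists_zpow_eq_or_of_commute (hn : IsPrimePow (2 * n)) {x y : QuaternionGroup n}
    (h : Commute x y) : (∃ k : ℤ, x = y ^ k) ∨ (∃ k : ℤ, y = x ^ k) := by
  rcases x with i | i <;> rcases y with j | j
  · exact exists_a_eq_a_zpow_or hn i j
  · exact .inl (exists_a_eq_xa_zpow (commute_a_xa_iff.1 h) j)
  · exact .inr (exists_a_eq_xa_zpow (commute_a_xa_iff.1 h.symm) i)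
  · exact .inl (exists_xa_eq_xa_zpow (commute_xa_xa_iff.1 h))

end QuaternionGroup

theorem Subgroup.isCyclic_closure_zpow_pair {G : Type*} [Group G] (x : G) (k : ℤ) :
    IsCyclic (closure {x ^ k, x}) :=
  isCyclic_of_le (H' := zpowers x) <| (closure_le _).2 <| by
    rintro _ (rfl | rfl)
    · exact zpow_mem_zpowers x k
    · exact mem_zpowers _

theorem powerGraph_le_enhancedPowerGraph (G : Type*) [Group G] :
    powerGraph G ≤ enhancedPowerGraph G := by
  rintro x y ⟨hne, ⟨k, rfl⟩ | ⟨k, rfl⟩⟩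
  · exact ⟨hne, Subgroup.isCyclic_closure_zpow_pair y k⟩
  · exact ⟨hne, Set.pair_comm x _ ▸ Subgroup.isCyclic_closure_zpow_pair x k⟩

theorem enhancedPowerGraph_le_commutingGraph (G : Type*) [Group G] :
    enhancedPowerGraph G ≤ commutingGraph G := by
  rintro x y ⟨hne, hcyc⟩
  let _ := hcyc.commGroup
  have hx : x ∈ Subgroup.closure {x, y} := Subgroup.subset_closure (.inl rfl)
  have hy : y ∈ Subgroup.closure {x, y} := Subgroup.subset_closure (.inr rfl)
  exact ⟨hne, congrArg Subtype.val (mul_comm (⟨x, hx⟩ : Subgroup.closure {x, y}) ⟨y, hy⟩)⟩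

theorem QuaternionGroup.commutingGraph_le_powerGraph {n : ℕ} [NeZero n]
    (hn : IsPrimePow (2 * n)) :
    commutingGraph (QuaternionGroup n) ≤ powerGraph (QuaternionGroup n) :=
  fun _ _ ⟨hne, h⟩ => ⟨hne, exists_zpow_eq_or_of_commute hn h⟩

theorem stmt11_general (n : ℕ) :
    powerGraph (QuaternionGroup (2 ^ (n - 1)))
        = enhancedPowerGraph (QuaternionGroup (2 ^ (n - 1))) ∧
      enhancedPowerGraph (QuaternionGroup (2 ^ (n - 1)))
        = commutingGraph (QuaternionGroup (2 ^ (n - 1))) ∧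
      (∀ x y : QuaternionGroup (2 ^ (n - 1)), x ≠ y →
        (x * y = y * x ↔ (∃ k : ℤ, x = y ^ k) ∨ (∃ k : ℤ, y = x ^ k))) := by
  have h₁ := powerGraph_le_enhancedPowerGraph (QuaternionGroup (2 ^ (n - 1)))
  have h₂ := enhancedPowerGraph_le_commutingGraph (QuaternionGroup (2 ^ (n - 1)))
  have h₃ := QuaternionGroup.commutingGraph_le_powerGraph (n := 2 ^ (n - 1))
    ⟨2, n - 1 + 1, Nat.prime_two.prime, by omega, by ring⟩
  refine ⟨h₁.antisymm (h₂.trans h₃), h₂.antisymm (h₃.trans h₁), fun x y hne => ?_⟩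
  exact ⟨fun h => (h₃ ⟨hne, h⟩).2, fun h => (h₂ (h₁ ⟨hne, h⟩)).2⟩

/-- For n ≥ 2, the power graph, enhanced power graph and commuting graph of `Q_{2^(n+1)}`
all coincide: distinct elements commute iff one is a power of the other. -/
theorem stmt11 (n : ℕ) (hn : 2 ≤ n) :
    powerGraph (QuaternionGroup (2 ^ (n - 1)))
        = enhancedPowerGraph (QuaternionGroup (2 ^ (n - 1))) ∧
      enhancedPowerGraph (QuaternionGroup (2 ^ (n - 1)))
        = commutingGraph (QuaternionGroup (2 ^ (n - 1))) ∧
      (∀ x y : QuaternionGroup (2 ^ (n - 1)), x ≠ y →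
        (x * y = y * x ↔ (∃ k : ℤ, x = y ^ k) ∨ (∃ k : ℤ, y = x ^ k))) :=
  stmt11_general n
end

section
/- For every m ≥ 2, the enhanced power graph of the dicyclic group Q_{4m} is isomorphic to the commuting graph of the dihedral group D_{2·2m}; an isomorphism is given by the vertex map h^i x^j ↦ a^i b^j. -/
open Subgroup

section Cyclic

variable {G : Type*} [Group G]

theorem commute_of_isCyclic_closure_pair {x y : G}
    (h : IsCyclic (closure ({x, y} : Set G))) : Commute x y := by
  let := IsCyclic.commGroup (α := closure ({x, y} : Set G))
  exact congrArg Subtype.val (mul_comm (⟨x, subset_closure (by simp)⟩ : closure ({x, y} : Set G))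
    ⟨y, subset_closure (by simp)⟩)

theorem isCyclic_closure_pair_of_mem_zpowers {x y g : G} (hx : x ∈ zpowers g)
    (hy : y ∈ zpowers g) : IsCyclic (closure ({x, y} : Set G)) :=
  isCyclic_of_le (closure_le _ |>.2 (Set.insert_subset hx (Set.singleton_subset_iff.2 hy)))

end Cyclic

def Equiv.commutingGraphIso {G H : Type*} [Group G] [Group H] (e : G ≃ H)
    (he : ∀ x y, Commute (e x) (e y) ↔ Commute x y) : commutingGraph G ≃g commutingGraph H where
  toEquiv := e
  map_rel_iff' := and_congr e.injective.ne_iff (he _ _)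

theorem ZMod.exists_eq_mul_of_two_mul_eq_zero {m : ℕ} {i : ZMod (2 * m)} (h : 2 * i = 0) :
    ∃ c : ℤ, i = m * c := by
  obtain ⟨k, rfl⟩ := ZMod.intCast_surjective i
  have h2k : ((2 * m : ℕ) : ℤ) ∣ 2 * k :=
    (ZMod.intCast_zmod_eq_zero_iff_dvd _ _).1 (by exact_mod_cast h)
  push_cast at h2k
  obtain ⟨c, rfl⟩ := Int.dvd_of_mul_dvd_mul_left two_ne_zero h2k
  exact ⟨c, by push_cast; rfl⟩

namespace QuaternionGroup

variable {n : ℕ}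

theorem a_zpow (i : ZMod (2 * n)) (k : ℤ) : a i ^ k = a (i * k : ZMod (2 * n)) := by
  induction k using Int.induction_on with
  | zero => simp
  | succ k ih => rw [zpow_add_one, ih, a_mul_a]; push_cast; ring_nf
  | pred k ih => rw [zpow_sub_one, ih, show (a i)⁻¹ = a (-i) from rfl, a_mul_a]; push_cast; ring_nf

theorem a_mem_zpowers_a_one (i : ZMod (2 * n)) : a i ∈ zpowers (a 1 : QuaternionGroup n) := by
  obtain ⟨k, rfl⟩ := ZMod.intCast_surjective i
  exact ⟨k, by simp only [a_zpow, one_mul]⟩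

theorem xa_zpow_two_mul (i : ZMod (2 * n)) (c : ℤ) : xa i ^ (2 * c) = a (n * c) := by
  rw [zpow_mul, zpow_ofNat, xa_sq, a_zpow]

theorem a_mem_zpowers_xa {i : ZMod (2 * n)} (hi : 2 * i = 0) (j : ZMod (2 * n)) :
    a i ∈ zpowers (xa j) := by
  obtain ⟨c, rfl⟩ := ZMod.exists_eq_mul_of_two_mul_eq_zero hi
  exact ⟨2 * c, xa_zpow_two_mul j c⟩

theorem xa_mem_zpowers_xa {i j : ZMod (2 * n)} (h : 2 * (j - i) = 0) : xa j ∈ zpowers (xa i) := by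
  obtain ⟨c, hc⟩ := ZMod.exists_eq_mul_of_two_mul_eq_zero h
  refine ⟨1 + 2 * c, ?_⟩
  change xa i ^ (1 + 2 * c) = xa j
  rw [zpow_one_add, xa_zpow_two_mul, xa_mul_a, ← hc, add_sub_cancel]

theorem isCyclic_closure_pair_of_commute_a_xa {i j : ZMod (2 * n)} (h : Commute (a i) (xa j)) :
    IsCyclic (closure ({a i, xa j} : Set (QuaternionGroup n))) := by
  have hij : j - i = j + i := xa.inj h
  exact isCyclic_closure_pair_of_mem_zpowers
    (a_mem_zpowers_xa (by linear_combination -hij) j) (mem_zpowers _)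

theorem isCyclic_closure_pair_iff_commute {x y : QuaternionGroup n} :
    IsCyclic (closure ({x, y} : Set (QuaternionGroup n))) ↔ Commute x y := by
  refine ⟨commute_of_isCyclic_closure_pair, fun h => ?_⟩
  rcases x with i | i <;> rcases y with j | j
  · exact isCyclic_closure_pair_of_mem_zpowers (a_mem_zpowers_a_one i) (a_mem_zpowers_a_one j)
  · exact isCyclic_closure_pair_of_commute_a_xa h
  · rw [Set.pair_comm]
    exact isCyclic_closure_pair_of_commute_a_xa h.symm
  · have hij : (n + j - i : ZMod (2 * n)) = n + i - j := a.inj h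
    exact isCyclic_closure_pair_of_mem_zpowers (mem_zpowers _)
      (xa_mem_zpowers_xa (by linear_combination hij))

theorem enhancedPowerGraph_eq_commutingGraph :
    enhancedPowerGraph (QuaternionGroup n) = commutingGraph (QuaternionGroup n) := by
  ext x y
  exact and_congr_right' isCyclic_closure_pair_iff_commute

open DihedralGroup in
def equivDihedralGroup (n : ℕ) : QuaternionGroup n ≃ DihedralGroup (2 * n) where
  toFun
    | a i => r i
    | xa i => sr i
  invFun
    | r i => a i
    | sr i => xa i
  left_inv := by rintro (i | i) <;> rfl
  right_inv := by rintro (i | i) <;> rfl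

theorem commute_equivDihedralGroup_iff (x y : QuaternionGroup n) :
    Commute (equivDihedralGroup n x) (equivDihedralGroup n y) ↔ Commute x y := by
  rcases x with i | i <;> rcases y with j | j <;>
    simp [equivDihedralGroup, commute_iff_eq, add_sub_assoc]

end QuaternionGroup

open QuaternionGroup DihedralGroup in
theorem stmt18_general (m : ℕ) :
    ∃ e : enhancedPowerGraph (QuaternionGroup m) ≃g commutingGraph (DihedralGroup (2 * m)),
      (∀ i : ZMod (2 * m), e (a i) = r i) ∧
        (∀ i : ZMod (2 * m), e (a i * xa 0) = r i * sr 0) := by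
  rw [enhancedPowerGraph_eq_commutingGraph]
  exact ⟨(equivDihedralGroup m).commutingGraphIso commute_equivDihedralGroup_iff,
    fun _ => rfl, fun _ => rfl⟩

open QuaternionGroup DihedralGroup in
/-- For m ≥ 2, the enhanced power graph of the dicyclic group `Q_{4m}` is isomorphic to
the commuting graph of `D_{2·2m}`, via the vertex map `h^i x^j ↦ a^i b^j`. -/
theorem stmt18 (m : ℕ) (hm : 2 ≤ m) :
    ∃ e : enhancedPowerGraph (QuaternionGroup m) ≃g commutingGraph (DihedralGroup (2 * m)),
      (∀ i : ZMod (2 * m), e (a i) = r i) ∧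
        (∀ i : ZMod (2 * m), e (a i * xa 0) = r i * sr 0) :=
  stmt18_general m
end
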